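/- arXiv:0908.4414 — 4 statements merged into one kernel-verified Lean document; each statement's English description precedes it below -/
import Mathlib

section
/- Let $V',V''$ be $2$-dimensional $\mathbb{F}_q$-vector spaces, $E = \mathrm{Hom}(V',V'') \times \mathrm{Hom}(V'',V')$, with the nondegenerate symmetric bilinear form $((A;B),(\tilde A;\tilde B)) = \mathrm{tr}(A\tilde B) + \mathrm{tr}(B\tilde A)$. Let $f_1(A;B)$ be the number of pairs of lines $(L',L'')$ with $L' \subset V'$, $L'' \subset V''$, $BV'' \subseteq L' \subseteq \ker A$ and $AV' \subseteq L'' \subseteq \ker B$. Then the Fourier transform $\hat f_1(\tilde A;\tilde B) = q^{-4}\sum_{(A;B)} \psi(((A;B),(\tilde A;\tilde B))) f_1(A;B)$ equals $q^{-2} \cdot |\{(L',L'') : \tilde A L' \subseteq L'', \tilde B L'' \subseteq L'\}|$. -/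
/-!
Writing `f₁` as a sum over pairs of lines `(L', L'')` and exchanging the sums, `q⁴ f̂₁(Ã; B̃)`
becomes a sum over `(L', L'')` of a product of two character sums, over
`{A | L' ⊆ ker A, im A ⊆ L''}` and over `{B | L'' ⊆ ker B, im B ⊆ L'}`.
For `L' = ⟨v⟩` and `L'' = ⟨w⟩` in `F²`, the first set is the line through the rank-one matrix
`w (perp v)ᵀ`, so its character sum is `q` if `tr (w (perp v)ᵀ B̃) = perp v ⬝ B̃ w` vanishes, that is
if `B̃ L'' ⊆ L'`, and `0` otherwise. Symmetrically for the second set, so each pair of lines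
contributes `q²` exactly when `Ã L' ⊆ L''` and `B̃ L'' ⊆ L'`.
-/

open Matrix Finset Module
open scoped Classical

theorem Nat.cast_card_subtype_eq_sum_ite {α R : Type*} [Fintype α] [AddCommMonoidWithOne R]
    (p : α → Prop) [DecidablePred p] : (Nat.card {a // p a} : R) = ∑ a, if p a then 1 else 0 := by
  rw [Nat.card_eq_fintype_card, Fintype.card_subtype, natCast_card_filter]

theorem Submodule.exists_ne_zero_eq_span_singleton_of_finrank_eq_one {K V : Type*} [Field K]
    [AddCommGroup V] [Module K V] {L : Submodule K V} (h : finrank K L = 1) :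
    ∃ v ≠ 0, L = K ∙ v :=
  ⟨_, (Projectivization.mk'' L h).rep_nonzero, by
    rw [← Projectivization.submodule_eq, Projectivization.submodule_mk'']⟩

theorem sum_filter_mem_span_singleton_addChar {F E R : Type*} [Field F] [Fintype F]
    [AddCommGroup E] [Module F E] [Fintype E] [CommRing R] [IsDomain R]
    {ψ : AddChar F R} (hψ : ψ ≠ 1) (φ : E →ₗ[F] F) {M : E} (hM : M ≠ 0) :
    ∑ x ∈ univ.filter (· ∈ F ∙ M), ψ (φ x) = if φ M = 0 then (Fintype.card F : R) else 0 := by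
  have hspan : univ.filter (· ∈ F ∙ M) = univ.image fun t : F => t • M := by
    ext x
    simp [Submodule.mem_span_singleton]
  rw [hspan, sum_image fun s _ t _ h => smul_left_injective F hM h]
  simp only [map_smul, smul_eq_mul]
  rw [AddChar.sum_mulShift _ (AddChar.IsPrimitive.of_ne_one hψ)]
  split_ifs <;> simp

theorem trace_vecMulVec_mul {n R : Type*} [Fintype n] [CommSemiring R] (w u : n → R)
    (C : Matrix n n R) : trace (vecMulVec w u * C) = u ⬝ᵥ C *ᵥ w := by
  rw [vecMulVec_mul, trace_vecMulVec, dotProduct_comm, dotProduct_mulVec]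

theorem vecMulVec_mulVec_eq_smul {m n R : Type*} [Fintype n] [CommSemiring R] (w : m → R)
    (c x : n → R) : vecMulVec w c *ᵥ x = (c ⬝ᵥ x) • w := by
  rw [vecMulVec_mulVec, op_smul_eq_smul]

theorem exists_eq_vecMulVec_of_range_mulVecLin_le {m n K : Type*} [Fintype n] [Field K]
    {A : Matrix m n K} {w : m → K} (h : LinearMap.range A.mulVecLin ≤ K ∙ w) :
    ∃ c : n → K, A = vecMulVec w c := by
  have hcol (j : n) : ∃ c : K, c • w = A.col j := by
    rw [← Submodule.mem_span_singleton, ← mulVec_single_one]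
    exact h (LinearMap.mem_range_self A.mulVecLin _)
  choose c hc using hcol
  exact ⟨c, ext fun i j => by
    rw [vecMulVec_apply, ← col_apply A j i, ← hc j, Pi.smul_apply, smul_eq_mul, mul_comm]⟩

section Perp

variable {F : Type*} [Field F] {v : Fin 2 → F}

/-- Rotation by a quarter turn: `perp v ⬝ᵥ x` is the determinant with columns `x` and `v`. -/
def perp (v : Fin 2 → F) : Fin 2 → F := ![v 1, -v 0]

theorem perp_dotProduct (v x : Fin 2 → F) : perp v ⬝ᵥ x = v 1 * x 0 - v 0 * x 1 := by
  simp only [perp, dotProduct, Fin.sum_univ_two, cons_val_zero, cons_val_one, cons_val_fin_one]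
  ring

theorem perp_perp (v : Fin 2 → F) : perp (perp v) = -v := by
  ext i; fin_cases i <;> simp [perp]

theorem perp_ne_zero (hv : v ≠ 0) : perp v ≠ 0 := by
  refine fun h => hv (neg_eq_zero.1 ?_)
  rw [← perp_perp, h]
  ext i; fin_cases i <;> simp [perp]

theorem mem_span_singleton_iff_perp_dotProduct_eq_zero (hv : v ≠ 0) {x : Fin 2 → F} :
    x ∈ F ∙ v ↔ perp v ⬝ᵥ x = 0 := by
  rw [perp_dotProduct, Submodule.mem_span_singleton]
  constructor
  · rintro ⟨c, rfl⟩
    simp only [Pi.smul_apply, smul_eq_mul]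
    ring
  · intro h
    rcases eq_or_ne (v 0) 0 with h0 | h0
    · have h1 : v 1 ≠ 0 := fun h1 => hv (funext fun i => by fin_cases i <;> simp [h0, h1])
      refine ⟨x 1 / v 1, funext fun i => ?_⟩
      fin_cases i
      · simpa [h0, h1, eq_comm] using h
      · simp [h1]
    · refine ⟨x 0 / v 0, funext fun i => ?_⟩
      fin_cases i
      · simp [h0]
      · simp only [Fin.mk_one, Pi.smul_apply, smul_eq_mul]
        field_simp
        linear_combination h

theorem dotProduct_eq_zero_iff_mem_span_perp (hv : v ≠ 0) {c : Fin 2 → F} :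
    c ⬝ᵥ v = 0 ↔ c ∈ F ∙ perp v := by
  rw [mem_span_singleton_iff_perp_dotProduct_eq_zero (perp_ne_zero hv), perp_perp,
    neg_dotProduct, dotProduct_comm, neg_eq_zero]

theorem le_ker_and_range_le_iff_mem_span_vecMulVec_perp {w : Fin 2 → F} (hv : v ≠ 0)
    (hw : w ≠ 0) {A : Matrix (Fin 2) (Fin 2) F} :
    F ∙ v ≤ LinearMap.ker A.mulVecLin ∧ LinearMap.range A.mulVecLin ≤ F ∙ w ↔
      A ∈ F ∙ vecMulVec w (perp v) := by
  rw [Submodule.span_singleton_le_iff_mem, LinearMap.mem_ker, Submodule.mem_span_singleton]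
  constructor
  · rintro ⟨hker, hrange⟩
    obtain ⟨c, rfl⟩ := exists_eq_vecMulVec_of_range_mulVecLin_le hrange
    have hc : c ⬝ᵥ v = 0 := by
      simpa [vecMulVec_mulVec_eq_smul, hw] using hker
    obtain ⟨t, rfl⟩ :=
      Submodule.mem_span_singleton.1 ((dotProduct_eq_zero_iff_mem_span_perp hv).1 hc)
    exact ⟨t, (vecMulVec_smul t w (perp v)).symm⟩
  · rintro ⟨t, rfl⟩
    refine ⟨?_, ?_⟩
    · rw [Matrix.mulVecLin_apply, smul_mulVec, vecMulVec_mulVec_eq_smul, perp_dotProduct]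
      simp [mul_comm]
    · rintro _ ⟨x, rfl⟩
      exact Submodule.mem_span_singleton.2 ⟨t * (perp v ⬝ᵥ x), by
        rw [Matrix.mulVecLin_apply, smul_mulVec, vecMulVec_mulVec_eq_smul, smul_smul]⟩

end Perp

section LinePairs

variable {F R : Type*} [Field F] [Fintype F] [CommRing R] [IsDomain R] {ψ : AddChar F R}

theorem sum_addChar_trace_mul_of_le_ker_of_range_le (hψ : ψ ≠ 1)
    {L' L'' : Submodule F (Fin 2 → F)} (h' : finrank F L' = 1) (h'' : finrank F L'' = 1)
    (C : Matrix (Fin 2) (Fin 2) F) :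
    ∑ A : Matrix (Fin 2) (Fin 2) F,
        (if L' ≤ LinearMap.ker A.mulVecLin ∧ LinearMap.range A.mulVecLin ≤ L''
          then ψ (trace (A * C)) else 0) =
      if L''.map C.mulVecLin ≤ L' then (Fintype.card F : R) else 0 := by
  obtain ⟨v, hv, rfl⟩ := Submodule.exists_ne_zero_eq_span_singleton_of_finrank_eq_one h'
  obtain ⟨w, hw, rfl⟩ := Submodule.exists_ne_zero_eq_span_singleton_of_finrank_eq_one h''
  rw [← sum_filter]
  simp_rw [le_ker_and_range_le_iff_mem_span_vecMulVec_perp hv hw]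
  have hsum := sum_filter_mem_span_singleton_addChar hψ
    (traceLinearMap (Fin 2) F F ∘ₗ LinearMap.mulRight F C) (vecMulVec_ne_zero hw (perp_ne_zero hv))
  simp only [LinearMap.comp_apply, LinearMap.mulRight_apply, traceLinearMap_apply] at hsum
  rw [hsum, trace_vecMulVec_mul, ← mem_span_singleton_iff_perp_dotProduct_eq_zero hv,
    Submodule.map_span, Set.image_singleton, Submodule.span_singleton_le_iff_mem,
    Matrix.mulVecLin_apply]

theorem sum_addChar_trace_add_trace_mul_indicator (hψ : ψ ≠ 1)
    (L' L'' : Submodule F (Fin 2 → F)) (Q : Matrix (Fin 2) (Fin 2) F × Matrix (Fin 2) (Fin 2) F) :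
    ∑ P : Matrix (Fin 2) (Fin 2) F × Matrix (Fin 2) (Fin 2) F,
        ψ (trace (P.1 * Q.2) + trace (P.2 * Q.1)) *
          (if finrank F L' = 1 ∧ finrank F L'' = 1 ∧
            LinearMap.range P.2.mulVecLin ≤ L' ∧ L' ≤ LinearMap.ker P.1.mulVecLin ∧
            LinearMap.range P.1.mulVecLin ≤ L'' ∧ L'' ≤ LinearMap.ker P.2.mulVecLin
            then 1 else 0) =
      (Fintype.card F : R) ^ 2 *
        if finrank F L' = 1 ∧ finrank F L'' = 1 ∧
          L'.map Q.1.mulVecLin ≤ L'' ∧ L''.map Q.2.mulVecLin ≤ L' then 1 else 0 := by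
  by_cases hlines : finrank F L' = 1 ∧ finrank F L'' = 1
  swap
  · have hnot (p : Prop) : ¬(finrank F L' = 1 ∧ finrank F L'' = 1 ∧ p) :=
      fun h => hlines ⟨h.1, h.2.1⟩
    simp only [hnot, if_false, mul_zero, sum_const_zero]
  simp only [hlines, true_and]
  have hsplit (P : Matrix (Fin 2) (Fin 2) F × Matrix (Fin 2) (Fin 2) F) :
      ψ (trace (P.1 * Q.2) + trace (P.2 * Q.1)) *
          (if LinearMap.range P.2.mulVecLin ≤ L' ∧ L' ≤ LinearMap.ker P.1.mulVecLin ∧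
            LinearMap.range P.1.mulVecLin ≤ L'' ∧ L'' ≤ LinearMap.ker P.2.mulVecLin
            then 1 else 0) =
        (if L' ≤ LinearMap.ker P.1.mulVecLin ∧ LinearMap.range P.1.mulVecLin ≤ L''
          then ψ (trace (P.1 * Q.2)) else 0) *
        (if L'' ≤ LinearMap.ker P.2.mulVecLin ∧ LinearMap.range P.2.mulVecLin ≤ L'
          then ψ (trace (P.2 * Q.1)) else 0) := by
    rw [ite_zero_mul_ite_zero, AddChar.map_add_eq_mul, mul_ite, mul_one, mul_zero]
    exact if_congr (by tauto) rfl rfl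
  rw [Fintype.sum_congr _ _ hsplit]
  simp only [Fintype.sum_prod_type, ← Fintype.sum_mul_sum]
  rw [sum_addChar_trace_mul_of_le_ker_of_range_le hψ hlines.1 hlines.2,
    sum_addChar_trace_mul_of_le_ker_of_range_le hψ hlines.2 hlines.1, ite_zero_mul_ite_zero,
    mul_ite, mul_one, mul_zero, sq]
  exact if_congr and_comm rfl rfl

end LinePairs

open scoped Classical in
/-- with `V' = V'' = 𝔽_q²` (maps given by `2×2` matrices), the Fourier
transform of the line-counting function `f₁` is `q^{-2}` times the number of pairs
of lines `(L', L'')` with `Ã L' ⊆ L''` and `B̃ L'' ⊆ L'`. -/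
theorem stmt_6 (F : Type*) [Field F] [Fintype F]
    (ψ : AddChar F ℂ) (hψ : ψ ≠ 1)
    (f₁ : Matrix (Fin 2) (Fin 2) F × Matrix (Fin 2) (Fin 2) F → ℂ)
    (hf₁ : ∀ P : Matrix (Fin 2) (Fin 2) F × Matrix (Fin 2) (Fin 2) F,
      f₁ P = (Nat.card {LL : Submodule F (Fin 2 → F) × Submodule F (Fin 2 → F) //
        Module.finrank F LL.1 = 1 ∧ Module.finrank F LL.2 = 1 ∧
        LinearMap.range P.2.mulVecLin ≤ LL.1 ∧ LL.1 ≤ LinearMap.ker P.1.mulVecLin ∧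
        LinearMap.range P.1.mulVecLin ≤ LL.2 ∧ LL.2 ≤ LinearMap.ker P.2.mulVecLin} : ℂ))
    (fhat₁ : Matrix (Fin 2) (Fin 2) F × Matrix (Fin 2) (Fin 2) F → ℂ)
    (hfhat₁ : ∀ Q : Matrix (Fin 2) (Fin 2) F × Matrix (Fin 2) (Fin 2) F,
      fhat₁ Q = ((Fintype.card F : ℂ) ^ 4)⁻¹ *
        ∑ P : Matrix (Fin 2) (Fin 2) F × Matrix (Fin 2) (Fin 2) F,
          ψ (Matrix.trace (P.1 * Q.2) + Matrix.trace (P.2 * Q.1)) * f₁ P) :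
    ∀ Q : Matrix (Fin 2) (Fin 2) F × Matrix (Fin 2) (Fin 2) F,
      fhat₁ Q = ((Fintype.card F : ℂ) ^ 2)⁻¹ *
        (Nat.card {LL : Submodule F (Fin 2 → F) × Submodule F (Fin 2 → F) //
          Module.finrank F LL.1 = 1 ∧ Module.finrank F LL.2 = 1 ∧
          Submodule.map Q.1.mulVecLin LL.1 ≤ LL.2 ∧
          Submodule.map Q.2.mulVecLin LL.2 ≤ LL.1} : ℂ) := by
  intro Q
  have hq : (Fintype.card F : ℂ) ≠ 0 := Nat.cast_ne_zero.2 Fintype.card_ne_zero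
  rw [hfhat₁, Nat.cast_card_subtype_eq_sum_ite]
  simp_rw [hf₁, Nat.cast_card_subtype_eq_sum_ite]
  rw [Fintype.sum_congr _ _ fun P => mul_sum _ _ _, sum_comm]
  simp only [sum_addChar_trace_add_trace_mul_indicator hψ _ _ Q, ← mul_sum]
  field_simp
end

section
/- Let $V',V''$ be $2$-dimensional $\mathbb{F}_q$-vector spaces and $E = \mathrm{Hom}(V',V'') \times \mathrm{Hom}(V'',V')$ with form $((A;B),(\tilde A;\tilde B)) = \mathrm{tr}(A\tilde B) + \mathrm{tr}(B\tilde A)$. Let $E^\circ$ be the set of $(A;B)$ with $A,B$ singular and $AB=0$, $BA=0$. Define $f(A;B)=1$ for $(A;B) \in E^\circ \setminus \{(0;0)\}$, $f(0;0)=1+2q$, $f=0$ on $E \setminus E^\circ$. Then for any $(A;B)$ with $A,B$ invertible and $AB$ regular semisimple, the Fourier transform $\hat f(A;B) = q^{-4}\sum_{(A';B')}\psi(((A';B'),(A;B)))f(A';B')$ equals $q^{-2}\zeta(A;B)$, where $\zeta(A;B)=1$ if the two eigenvalues of $AB$ lie in $\mathbb{F}_q$ and $\zeta(A;B)=-1$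 otherwise. -/
/-!
Since `f = 1_{E°} + 2q δ₀`, we have `q⁴ f̂(A;B) = 2q + ∑_{(C;D) ∈ E°} ψ(tr CB + tr DA)`.
With `J` the rotation `(x, y) ↦ (y, -x)`, the points of `E°` are the pairs `(0; D)` with `D`
singular, and the pairs `(u pᵀ; l (Jp)(Ju)ᵀ)` where `p` runs over representatives of the `q + 1`
points of `ℙ¹(𝔽_q)`, `u ≠ 0` and `l ∈ 𝔽_q`. For `A` invertible the first family contributes
`-q`. Summing the second family over `l` and then over `u`, the point `p` contributes `q(q - 1)`
if `Jp` is an eigenvector of `BA` and `-q` otherwise. Since `BA` has the same separable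
characteristic polynomial as `AB`, its eigenlines correspond to its eigenvalues in `𝔽_q`, of
which there are `1 + ζ(A;B)`; so the total is `q² ζ(A;B)`.
-/

/-- The set `E°` of pairs of singular `2×2` matrices composing to zero in both
orders. -/
def Ecirc {F : Type*} [Field F]
    (P : Matrix (Fin 2) (Fin 2) F × Matrix (Fin 2) (Fin 2) F) : Prop :=
  ¬ IsUnit P.1 ∧ ¬ IsUnit P.2 ∧ P.1 * P.2 = 0 ∧ P.2 * P.1 = 0

open Matrix Finset

namespace FinTwo

open scoped Classical

variable {F : Type*} [Field F]

section Generic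

variable {m : Type*} [Fintype m] [DecidableEq m]

lemma not_isUnit_iff_det_eq_zero (M : Matrix m m F) : ¬IsUnit M ↔ M.det = 0 := by
  rw [isUnit_iff_isUnit_det, isUnit_iff_ne_zero, not_not]

lemma vecMul_ne_zero_of_isUnit {A : Matrix m m F} (hA : IsUnit A) {v : m → F} (hv : v ≠ 0) :
    v ᵥ* A ≠ 0 := by
  simpa using (vecMul_injective_of_isUnit hA).ne hv

lemma mulVec_ne_zero_of_isUnit {A : Matrix m m F} (hA : IsUnit A) {v : m → F} (hv : v ≠ 0) :
    A *ᵥ v ≠ 0 := by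
  simpa using (mulVec_injective_of_isUnit hA).ne hv

variable [Fintype F] {ψ : AddChar F ℂ}

lemma sum_filter_exists_smul_eq {V : Type*} [AddCommGroup V] [Module F V] [Fintype V]
    {M : V} [DecidablePred fun x : V => ∃ l : F, x = l • M] (hM : M ≠ 0) (g : V → ℂ) :
    ∑ x ∈ {x : V | ∃ l : F, x = l • M}, g x = ∑ l : F, g (l • M) := by
  rw [← sum_image (s := univ) (g := fun l : F => l • M)
    fun _ _ _ _ h => smul_left_injective F hM h]
  congr 1
  ext x
  simp [eq_comm]

lemma sum_addChar_dotProduct_eq_zero (hψ : ψ ≠ 1) {w : m → F} (hw : w ≠ 0) :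
    ∑ u, ψ (u ⬝ᵥ w) = 0 := by
  obtain ⟨i, hi⟩ := Function.ne_iff.1 hw
  obtain ⟨x, hx⟩ := AddChar.ne_one_iff.1 hψ
  let χ : AddChar (m → F) ℂ :=
    ψ.compAddMonoidHom (AddMonoidHom.mk' (· ⬝ᵥ w) fun a b => add_dotProduct a b w)
  refine AddChar.sum_eq_zero_of_ne_one (ψ := χ) (AddChar.ne_one_iff.2 ⟨Pi.single i (x / w i), ?_⟩)
  simpa [χ, single_dotProduct, div_mul_cancel₀ _ hi] using hx

lemma sum_ne_zero_addChar_dotProduct (hψ : ψ ≠ 1) {w : m → F} (hw : w ≠ 0) :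
    ∑ u ∈ {u | u ≠ 0}, ψ (u ⬝ᵥ w) = -1 := by
  rw [filter_ne', sum_erase_eq_sub (mem_univ _), sum_addChar_dotProduct_eq_zero hψ hw]
  simp

end Generic

def perp (v : Fin 2 → F) : Fin 2 → F := ![v 1, -v 0]

lemma dotProduct_perp_self (v : Fin 2 → F) : v ⬝ᵥ perp v = 0 := by
  simp [perp, dotProduct, Fin.sum_univ_two, mul_comm]

lemma perp_dotProduct (x y : Fin 2 → F) : perp x ⬝ᵥ y = -(x ⬝ᵥ perp y) := by
  simp [perp, dotProduct, Fin.sum_univ_two]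

lemma perp_perp (v : Fin 2 → F) : perp (perp v) = -v := by
  ext i; fin_cases i <;> simp [perp]

lemma perp_ne_zero {v : Fin 2 → F} (hv : v ≠ 0) : perp v ≠ 0 := by
  simpa [perp, funext_iff, Fin.forall_fin_two, and_comm] using hv

lemma dotProduct_eq_zero_iff_exists_smul_perp {w : Fin 2 → F} (hw : w ≠ 0) (x : Fin 2 → F) :
    x ⬝ᵥ w = 0 ↔ ∃ l : F, x = l • perp w := by
  refine ⟨fun h => ?_, ?_⟩
  · simp only [dotProduct, Fin.sum_univ_two] at h
    by_cases h0 : w 0 = 0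
    · have h1 : w 1 ≠ 0 := fun h1 => hw (by ext i; fin_cases i <;> simp [h0, h1])
      refine ⟨x 0 / w 1, ?_⟩
      ext i; fin_cases i
      · simp [perp, h1]
      · simpa [perp, h0, h1] using h
    · refine ⟨-(x 1 / w 0), ?_⟩
      ext i; fin_cases i
      · simp only [perp, Fin.zero_eta, Fin.isValue, Pi.smul_apply, cons_val_zero, smul_eq_mul]
        field_simp
        linear_combination h
      · simp only [perp, Fin.mk_one, Fin.isValue, Pi.smul_apply, cons_val_one, cons_val_fin_one,
          smul_eq_mul]
        field_simp
  · rintro ⟨l, rfl⟩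
    rw [smul_dotProduct, perp_dotProduct, dotProduct_perp_self, neg_zero, smul_zero]

lemma mulVec_eq_zero_iff_exists_vecMulVec {w : Fin 2 → F} (hw : w ≠ 0)
    (M : Matrix (Fin 2) (Fin 2) F) : M *ᵥ w = 0 ↔ ∃ a : Fin 2 → F, M = vecMulVec a (perp w) := by
  refine ⟨fun h => ?_, ?_⟩
  · choose a ha using fun i => (dotProduct_eq_zero_iff_exists_smul_perp hw (M i)).1 (congrFun h i)
    exact ⟨a, by ext i j; simp [ha i, vecMulVec_apply]⟩
  · rintro ⟨a, rfl⟩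
    rw [vecMulVec_mulVec, perp_dotProduct, dotProduct_perp_self, neg_zero, MulOpposite.op_zero,
      zero_smul]

/-- Representatives of the `q + 1` points of `ℙ¹(F)`; `none` is the point at infinity. -/
def lineRep : Option F → Fin 2 → F
  | none => ![0, 1]
  | some s => ![1, s]

lemma exists_lineRep_eq_one (o : Option F) : ∃ j, lineRep o j = 1 := by
  cases o
  · exact ⟨1, rfl⟩
  · exact ⟨0, rfl⟩

lemma lineRep_ne_zero (o : Option F) : lineRep o ≠ 0 := fun h => by
  obtain ⟨j, hj⟩ := exists_lineRep_eq_one o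
  simp [h] at hj

lemma exists_eq_smul_lineRep (w : Fin 2 → F) : ∃ (c : F) (o : Option F), w = c • lineRep o := by
  by_cases h0 : w 0 = 0
  · refine ⟨w 1, none, ?_⟩
    ext i; fin_cases i <;> simp [lineRep, h0]
  · refine ⟨w 0, some (w 1 / w 0), ?_⟩
    ext i; fin_cases i
    · simp [lineRep]
    · simp [lineRep, mul_div_cancel₀ _ h0]

lemma eq_of_smul_lineRep_eq {c c' : F} {o o' : Option F} (hc : c ≠ 0)
    (h : c • lineRep o = c' • lineRep o') : o = o' := by
  cases o <;> cases o' <;>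
    simp only [lineRep, smul_cons, smul_eq_mul, mul_zero, mul_one, Matrix.smul_empty, funext_iff,
      Fin.forall_fin_two, Fin.isValue, cons_val_zero, cons_val_one, cons_val_fin_one, true_and,
      reduceCtorEq, Option.some.injEq] at h ⊢
  · exact hc (by rw [h.2, ← h.1, zero_mul])
  · exact hc h.1
  · obtain ⟨rfl, h⟩ := h
    exact mul_left_cancel₀ hc h

lemma eq_of_vecMulVec_lineRep_eq {u u' : Fin 2 → F} {o o' : Option F} (hu : u ≠ 0)
    (h : vecMulVec u (lineRep o) = vecMulVec u' (lineRep o')) : o = o' ∧ u = u' := by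
  obtain ⟨i, hi⟩ := Function.ne_iff.1 hu
  have ho : o = o' := eq_of_smul_lineRep_eq hi <| by
    ext j; simpa [vecMulVec_apply] using congrFun (congrFun h i) j
  subst ho
  obtain ⟨j, hj⟩ := exists_lineRep_eq_one o
  exact ⟨rfl, by ext i; simpa [vecMulVec_apply, hj] using congrFun (congrFun h i) j⟩

lemma exists_eq_vecMulVec_lineRep {C : Matrix (Fin 2) (Fin 2) F} (hC : C.det = 0) :
    ∃ (u : Fin 2 → F) (o : Option F), C = vecMulVec u (lineRep o) := by
  obtain ⟨w, hw, hCw⟩ := exists_mulVec_eq_zero_iff.2 hC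
  obtain ⟨a, rfl⟩ := (mulVec_eq_zero_iff_exists_vecMulVec hw C).1 hCw
  obtain ⟨c, o, hco⟩ := exists_eq_smul_lineRep (perp w)
  exact ⟨c • a, o, by rw [hco, vecMulVec_smul, smul_vecMulVec]⟩

lemma ecirc_vecMulVec_iff {u v : Fin 2 → F} (hu : u ≠ 0) (hv : v ≠ 0)
    (D : Matrix (Fin 2) (Fin 2) F) :
    Ecirc (vecMulVec u v, D) ↔ ∃ l : F, D = l • vecMulVec (perp v) (perp u) := by
  constructor
  · rintro ⟨-, -, hCD, hDC⟩
    rw [vecMulVec_mul, vecMulVec_eq_zero] at hCD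
    rw [mul_vecMulVec, vecMulVec_eq_zero] at hDC
    obtain ⟨a, rfl⟩ := (mulVec_eq_zero_iff_exists_vecMulVec hu D).1 (hDC.resolve_right hv)
    rw [vecMul_vecMulVec, smul_eq_zero] at hCD
    have hav : a ⬝ᵥ v = 0 := by
      rw [dotProduct_comm]
      exact (hCD.resolve_left hu).resolve_right (perp_ne_zero hu)
    obtain ⟨l, rfl⟩ := (dotProduct_eq_zero_iff_exists_smul_perp hv a).1 hav
    exact ⟨l, smul_vecMulVec ..⟩
  · rintro ⟨l, rfl⟩
    refine ⟨?_, ?_, ?_, ?_⟩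
    · rw [not_isUnit_iff_det_eq_zero, det_vecMulVec]
    · rw [not_isUnit_iff_det_eq_zero, ← smul_vecMulVec, det_vecMulVec]
    · change vecMulVec u v * (l • _) = 0
      rw [Matrix.mul_smul, vecMulVec_mul_vecMulVec, dotProduct_perp_self, zero_smul,
        vecMulVec_zero, smul_zero]
    · change (l • _) * vecMulVec u v = 0
      rw [Matrix.smul_mul, vecMulVec_mul_vecMulVec, dotProduct_comm, dotProduct_perp_self,
        zero_smul, vecMulVec_zero, smul_zero]

section Sums

variable [Fintype F] {ψ : AddChar F ℂ}

lemma sum_filter_ne_zero_det_eq_zero (g : Matrix (Fin 2) (Fin 2) F → ℂ) :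
    ∑ C ∈ {C | C ≠ 0 ∧ C.det = 0}, g C
      = ∑ o, ∑ u ∈ {u | u ≠ 0}, g (vecMulVec u (lineRep o)) := by
  rw [← sum_product']
  symm
  apply sum_nbij (fun x => vecMulVec x.2 (lineRep x.1))
  · rintro ⟨o, u⟩ hu
    simp only [mem_product, mem_filter, mem_univ, true_and] at hu ⊢
    exact ⟨vecMulVec_ne_zero hu (lineRep_ne_zero o), det_vecMulVec _ _⟩
  · rintro ⟨o, u⟩ hu ⟨o', u'⟩ - h
    simp only [coe_product, coe_univ, coe_filter, mem_univ, true_and, Set.mem_prod,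
      Set.mem_univ, Set.mem_ofPred_eq] at hu
    obtain ⟨rfl, rfl⟩ := eq_of_vecMulVec_lineRep_eq hu h
    rfl
  · intro C hC
    simp only [coe_filter, mem_univ, true_and, Set.mem_ofPred_eq] at hC
    obtain ⟨u, o, rfl⟩ := exists_eq_vecMulVec_lineRep hC.2
    refine ⟨(o, u), ?_, rfl⟩
    simpa using fun hu : u = 0 => hC.1 (by rw [hu, zero_vecMulVec])
  · intro _ _; rfl

lemma sum_filter_det_eq_zero (g : Matrix (Fin 2) (Fin 2) F → ℂ) :
    ∑ C ∈ {C | C.det = 0}, g C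
      = g 0 + ∑ o, ∑ u ∈ {u | u ≠ 0}, g (vecMulVec u (lineRep o)) := by
  rw [← sum_filter_ne_zero_det_eq_zero, ← add_sum_erase _ _ (by simp : (0 : Matrix _ _ F) ∈ _)]
  congr 2
  ext C
  simp [and_comm]

lemma sum_filter_ecirc (g : Matrix (Fin 2) (Fin 2) F × Matrix (Fin 2) (Fin 2) F → ℂ) :
    ∑ P ∈ {P | Ecirc P}, g P
      = ∑ D ∈ {D | D.det = 0}, g (0, D)
        + ∑ o, ∑ u ∈ {u | u ≠ 0}, ∑ l : F,
            g (vecMulVec u (lineRep o), l • vecMulVec (perp (lineRep o)) (perp u)) := by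
  have hsingular : ∀ C ∈ univ, ∑ D ∈ {D | Ecirc (C, D)}, g (C, D) ≠ 0 → C.det = 0 := by
    intro C _ hC
    obtain ⟨D, hD, -⟩ := exists_ne_zero_of_sum_ne_zero hC
    exact (not_isUnit_iff_det_eq_zero C).1 (mem_filter.1 hD).2.1
  rw [sum_filter, Fintype.sum_prod_type]
  simp_rw [← sum_filter (fun D => Ecirc (_, D))]
  rw [← sum_filter_of_ne hsingular, sum_filter_det_eq_zero]
  congr 1
  · exact sum_congr (by ext D; simp [Ecirc, not_isUnit_iff_det_eq_zero]) fun _ _ => rfl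
  · refine sum_congr rfl fun o _ => sum_congr rfl fun u hu => ?_
    have hu : u ≠ 0 := (mem_filter.1 hu).2
    rw [← sum_filter_exists_smul_eq
      (vecMulVec_ne_zero (perp_ne_zero (lineRep_ne_zero o)) (perp_ne_zero hu))
      (fun D => g (vecMulVec u (lineRep o), D))]
    exact sum_congr (by ext D; simp [ecirc_vecMulVec_iff hu (lineRep_ne_zero o)]) fun _ _ => rfl

lemma sum_ne_zero_orthogonal_addChar_dotProduct (hψ : ψ ≠ 1) {w : Fin 2 → F} (hw : w ≠ 0)
    (z : Fin 2 → F) :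
    ∑ u ∈ {u | u ≠ 0 ∧ u ⬝ᵥ w = 0}, ψ (u ⬝ᵥ z)
      = (if perp w ⬝ᵥ z = 0 then (Fintype.card F : ℂ) else 0) - 1 := by
  have hline : ∑ u ∈ {u | u ⬝ᵥ w = 0}, ψ (u ⬝ᵥ z) = ∑ l : F, ψ (l * (perp w ⬝ᵥ z)) := by
    rw [filter_congr fun u _ => dotProduct_eq_zero_iff_exists_smul_perp hw u,
      sum_filter_exists_smul_eq (perp_ne_zero hw)]
    simp_rw [smul_dotProduct, smul_eq_mul]
  have herase : ({u | u ≠ 0 ∧ u ⬝ᵥ w = 0} : Finset (Fin 2 → F))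
      = ({u | u ⬝ᵥ w = 0} : Finset _).erase 0 := by
    ext u; simp
  rw [herase, sum_erase_eq_sub (by simp), hline,
    AddChar.sum_mulShift _ (AddChar.IsPrimitive.of_ne_one hψ)]
  simp

end Sums

section Roots

open Polynomial

lemma card_roots_charpoly_eq_zero_or_two (N : Matrix (Fin 2) (Fin 2) F) :
    N.charpoly.roots.card = 0 ∨ N.charpoly.roots.card = 2 := by
  rcases Multiset.empty_or_exists_mem N.charpoly.roots with h | ⟨x, hx⟩
  · left; simp [h]
  · right
    have hdeg : N.charpoly.natDegree = 2 := by simp [charpoly_natDegree_eq_dim]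
    refine (splits_iff_card_roots.1 ?_).trans hdeg
    exact Splits.of_natDegree_eq_two hdeg ((mem_roots (charpoly_monic N).ne_zero).1 hx)

lemma lineRep_none_dotProduct_mulVec_perp (N : Matrix (Fin 2) (Fin 2) F) :
    lineRep none ⬝ᵥ N *ᵥ perp (lineRep none) = N 1 0 := by
  simp [lineRep, perp, dotProduct, mulVec, Fin.sum_univ_two]

lemma lineRep_some_dotProduct_mulVec_perp (N : Matrix (Fin 2) (Fin 2) F) (s : F) :
    lineRep (some s) ⬝ᵥ N *ᵥ perp (lineRep (some s))
      = N 1 0 * s ^ 2 + (N 0 0 - N 1 1) * s - N 0 1 := by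
  simp only [dotProduct, lineRep, mulVec, perp, Fin.isValue, cons_val_one, cons_val_fin_one,
    cons_val_zero, Fin.sum_univ_two, mul_neg, mul_one, one_mul]
  ring

lemma eval_charpoly_fin_two (N : Matrix (Fin 2) (Fin 2) F) (x : F) :
    N.charpoly.eval x = x ^ 2 - (N 0 0 + N 1 1) * x + (N 0 0 * N 1 1 - N 0 1 * N 1 0) := by
  simp [charpoly_fin_two, trace_fin_two, det_fin_two]

variable [Fintype F]

lemma card_roots_eq_card_filter_eval_eq_zero {p : F[X]} (hp : p.Separable) :
    p.roots.card = #{x | p.eval x = 0} := by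
  rw [← Multiset.toFinset_card_of_nodup (nodup_roots hp)]
  congr 1
  ext x
  simp [mem_roots hp.ne_zero]

lemma card_filter_lineRep_eigen_of_lower_eq_zero {N : Matrix (Fin 2) (Fin 2) F}
    (hsep : N.charpoly.Separable) (h10 : N 1 0 = 0) :
    #{o | lineRep o ⬝ᵥ N *ᵥ perp (lineRep o) = 0} = #{x | N.charpoly.eval x = 0} := by
  have hne : N 0 0 ≠ N 1 1 := by
    intro h
    have hsq : N.charpoly = (X - C (N 0 0)) * (X - C (N 0 0)) := by
      rw [charpoly_fin_two, trace_fin_two, det_fin_two, h10, ← h]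
      simp only [map_add, map_mul, mul_zero, sub_zero]
      ring
    rw [hsq] at hsep
    exact not_isUnit_X_sub_C _ (isCoprime_self.1 hsep.isCoprime)
  have hlhs : ({o | lineRep o ⬝ᵥ N *ᵥ perp (lineRep o) = 0} : Finset (Option F))
      = {none, some (N 0 1 / (N 0 0 - N 1 1))} := by
    ext (_ | s)
    · simp only [mem_filter, mem_univ, true_and, lineRep_none_dotProduct_mulVec_perp, h10,
        mem_insert, true_or]
    · simp only [mem_filter, mem_univ, true_and, lineRep_some_dotProduct_mulVec_perp, h10,
        mem_insert, mem_singleton, zero_mul, zero_add, reduceCtorEq, false_or, Option.some.injEq,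
        eq_div_iff (sub_ne_zero.2 hne)]
      constructor <;> intro h <;> linear_combination h
  have hrhs : ({x | N.charpoly.eval x = 0} : Finset F) = {N 0 0, N 1 1} := by
    ext x
    simp only [mem_filter, mem_univ, true_and, eval_charpoly_fin_two, h10, mem_insert,
      mem_singleton]
    rw [show x ^ 2 - (N 0 0 + N 1 1) * x + (N 0 0 * N 1 1 - N 0 1 * 0)
        = (x - N 0 0) * (x - N 1 1) by ring, mul_eq_zero, sub_eq_zero, sub_eq_zero]
  rw [hlhs, hrhs, card_pair (by simp), card_pair hne]

lemma card_filter_lineRep_eigen_of_lower_ne_zero {N : Matrix (Fin 2) (Fin 2) F}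
    (h10 : N 1 0 ≠ 0) :
    #{o | lineRep o ⬝ᵥ N *ᵥ perp (lineRep o) = 0} = #{x | N.charpoly.eval x = 0} := by
  have heval : ∀ s, N.charpoly.eval (N 0 0 + N 1 0 * s)
      = N 1 0 * (lineRep (some s) ⬝ᵥ N *ᵥ perp (lineRep (some s))) := by
    intro s
    rw [eval_charpoly_fin_two, lineRep_some_dotProduct_mulVec_perp]
    ring
  have hinv : ∀ x, N 0 0 + N 1 0 * ((x - N 0 0) / N 1 0) = x := by
    intro x; field_simp; ring
  have hnone : none ∉ ({o | lineRep o ⬝ᵥ N *ᵥ perp (lineRep o) = 0} : Finset (Option F)) := by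
    simpa only [mem_filter, mem_univ, true_and, lineRep_none_dotProduct_mulVec_perp] using h10
  apply card_nbij' (fun o => N 0 0 + N 1 0 * o.getD 0) (fun x => some ((x - N 0 0) / N 1 0))
  · rintro (_ | s) ho
    · exact absurd ho hnone
    · simp only [coe_filter, mem_univ, true_and, Set.mem_ofPred_eq] at ho ⊢
      rw [Option.getD_some, heval, ho, mul_zero]
  · intro x hx
    simp only [coe_filter, mem_univ, true_and, Set.mem_ofPred_eq] at hx ⊢
    have h := heval ((x - N 0 0) / N 1 0)
    rw [hinv, hx] at h
    exact (mul_eq_zero.1 h.symm).resolve_left h10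
  · rintro (_ | s) ho
    · exact absurd ho hnone
    · simp only [Option.getD_some, add_sub_cancel_left, Option.some.injEq]
      field_simp
  · intro x _
    simp only [Option.getD_some, hinv]

/-- `p ⬝ᵥ N *ᵥ perp p = 0` says that `perp p` is an eigenvector of `N`, so the left-hand side
counts the eigenlines of `N`. -/
lemma card_filter_lineRep_eigen {N : Matrix (Fin 2) (Fin 2) F} (hsep : N.charpoly.Separable) :
    #{o | lineRep o ⬝ᵥ N *ᵥ perp (lineRep o) = 0} = N.charpoly.roots.card := by
  rw [card_roots_eq_card_filter_eval_eq_zero hsep]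
  by_cases h10 : N 1 0 = 0
  · exact card_filter_lineRep_eigen_of_lower_eq_zero hsep h10
  · exact card_filter_lineRep_eigen_of_lower_ne_zero h10

end Roots

section Fourier

variable [Fintype F] {ψ : AddChar F ℂ}

lemma sum_filter_det_eq_zero_addChar_trace_mul (hψ : ψ ≠ 1) {A : Matrix (Fin 2) (Fin 2) F}
    (hA : IsUnit A) :
    ∑ D ∈ {D | D.det = 0}, ψ (trace (D * A)) = -(Fintype.card F : ℂ) := by
  have hline : ∀ o, ∑ u ∈ {u | u ≠ 0}, ψ (trace (vecMulVec u (lineRep o) * A)) = -1 := by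
    intro o
    simp_rw [vecMulVec_mul, trace_vecMulVec]
    exact sum_ne_zero_addChar_dotProduct hψ (vecMul_ne_zero_of_isUnit hA (lineRep_ne_zero o))
  rw [sum_filter_det_eq_zero, sum_congr rfl fun o _ => hline o]
  simp [Fintype.card_option]

lemma sum_addChar_trace_fiber (hψ : ψ ≠ 1) (A B : Matrix (Fin 2) (Fin 2) F) (u p : Fin 2 → F) :
    ∑ l : F, ψ (trace (vecMulVec u p * B) + trace ((l • vecMulVec (perp p) (perp u)) * A))
      = if u ⬝ᵥ perp (A *ᵥ perp p) = 0 then ψ (u ⬝ᵥ (p ᵥ* B)) * Fintype.card F else 0 := by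
  have htr : ∀ l : F, trace ((l • vecMulVec (perp p) (perp u)) * A)
      = l * -(u ⬝ᵥ perp (A *ᵥ perp p)) := by
    intro l
    rw [Matrix.smul_mul, trace_smul, vecMulVec_mul, trace_vecMulVec, dotProduct_comm,
      ← dotProduct_mulVec, perp_dotProduct, smul_eq_mul]
  simp_rw [htr, AddChar.map_add_eq_mul, ← mul_sum, vecMulVec_mul, trace_vecMulVec,
    AddChar.sum_mulShift _ (AddChar.IsPrimitive.of_ne_one hψ), neg_eq_zero]
  split_ifs <;> simp

lemma sum_filter_ecirc_addChar_trace (hψ : ψ ≠ 1) {A : Matrix (Fin 2) (Fin 2) F} (hA : IsUnit A)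
    (B : Matrix (Fin 2) (Fin 2) F) :
    ∑ P ∈ {P | Ecirc P}, ψ (trace (P.1 * B) + trace (P.2 * A))
      = (Fintype.card F : ℂ) ^ 2 * #{o | lineRep o ⬝ᵥ (B * A) *ᵥ perp (lineRep o) = 0}
        - (Fintype.card F : ℂ) ^ 2 - 2 * Fintype.card F := by
  have hfiber : ∀ o, ∑ u ∈ {u | u ≠ 0}, ∑ l : F, ψ (trace (vecMulVec u (lineRep o) * B)
        + trace ((l • vecMulVec (perp (lineRep o)) (perp u)) * A))
      = Fintype.card F * ((if lineRep o ⬝ᵥ (B * A) *ᵥ perp (lineRep o) = 0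
          then (Fintype.card F : ℂ) else 0) - 1) := by
    intro o
    set p := lineRep o
    have hw : perp (A *ᵥ perp p) ≠ 0 :=
      perp_ne_zero (mulVec_ne_zero_of_isUnit hA (perp_ne_zero (lineRep_ne_zero o)))
    have hcond : perp (perp (A *ᵥ perp p)) ⬝ᵥ (p ᵥ* B) = -(p ⬝ᵥ (B * A) *ᵥ perp p) := by
      rw [perp_perp, neg_dotProduct, dotProduct_comm, ← dotProduct_mulVec, mulVec_mulVec]
    simp_rw [sum_addChar_trace_fiber hψ, ← sum_filter, filter_filter, ← sum_mul,
      sum_ne_zero_orthogonal_addChar_dotProduct hψ hw, hcond, neg_eq_zero, mul_comm]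
  rw [sum_filter_ecirc, sum_congr rfl fun o _ => hfiber o]
  simp_rw [zero_mul, trace_zero, zero_add, sum_filter_det_eq_zero_addChar_trace_mul hψ hA]
  rw [← mul_sum, sum_sub_distrib, ← sum_filter, sum_const, sum_const, card_univ,
    Fintype.card_option]
  simp only [nsmul_eq_mul, mul_one]
  push_cast
  ring

end Fourier

end FinTwo

open FinTwo

open scoped Classical in
/-- the Fourier transform of `f` (the indicator of `E°` with value
`1 + 2q` at `0`) at an invertible regular semisimple pair `(A;B)` is
`q^{-2} ζ(A;B)`, where `ζ = 1` iff both eigenvalues of `AB` lie in `𝔽_q`. -/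
theorem stmt_7 (F : Type*) [Field F] [Fintype F]
    (ψ : AddChar F ℂ) (hψ : ψ ≠ 1)
    (f : Matrix (Fin 2) (Fin 2) F × Matrix (Fin 2) (Fin 2) F → ℂ)
    (hf : ∀ P : Matrix (Fin 2) (Fin 2) F × Matrix (Fin 2) (Fin 2) F,
      f P = if P = 0 then 1 + 2 * (Fintype.card F : ℂ)
        else if Ecirc P then 1 else 0)
    (fhat : Matrix (Fin 2) (Fin 2) F × Matrix (Fin 2) (Fin 2) F → ℂ)
    (hfhat : ∀ Q : Matrix (Fin 2) (Fin 2) F × Matrix (Fin 2) (Fin 2) F,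
      fhat Q = ((Fintype.card F : ℂ) ^ 4)⁻¹ *
        ∑ P : Matrix (Fin 2) (Fin 2) F × Matrix (Fin 2) (Fin 2) F,
          ψ (Matrix.trace (P.1 * Q.2) + Matrix.trace (P.2 * Q.1)) * f P) :
    ∀ A B : Matrix (Fin 2) (Fin 2) F, IsUnit A → IsUnit B →
      (A * B).charpoly.Separable →
      fhat (A, B) = ((Fintype.card F : ℂ) ^ 2)⁻¹ *
        (if (A * B).charpoly.roots.card = 2 then 1 else -1) := by
  intro A B hA _ hsep
  have hq : (Fintype.card F : ℂ) ≠ 0 := Nat.cast_ne_zero.2 Fintype.card_ne_zero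
  have hsplit : ∀ P, ψ (trace (P.1 * B) + trace (P.2 * A)) * f P
      = (if Ecirc P then ψ (trace (P.1 * B) + trace (P.2 * A)) else 0)
        + if P = 0 then 2 * (Fintype.card F : ℂ) else 0 := by
    intro P
    by_cases hP : P = 0
    · simp [hf, hP, Ecirc]
    · simp [hf, hP]
  rw [hfhat, sum_congr rfl fun P _ => hsplit P, sum_add_distrib, ← sum_filter, sum_ite_eq',
    sum_filter_ecirc_addChar_trace hψ hA,
    card_filter_lineRep_eigen (charpoly_mul_comm A B ▸ hsep), ← charpoly_mul_comm,
    if_pos (mem_univ _), sub_add_cancel]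
  rcases card_roots_charpoly_eq_zero_or_two (A * B) with h | h <;>
  · rw [h]
    field_simp
    norm_num
end

section
/- Let $V$ be a $3$-dimensional vector space over an algebraically closed field $k$ (char $\neq 2$) with nondegenerate symmetric bilinear form. Identify the flag variety of $GL(V)$ with pairs $(L,P)$, $L$ a line contained in a plane $P$. Let $Q$ be the conic of isotropic lines and $Q'$ the set of planes $P$ with $P^\perp \subseteq P$. Then the four sets $\{(L,P) : L \in Q, P \in Q'\}$, $\{(L,P): L \in Q, P \notin Q'\}$, $\{(L,P): L \notin Q, P \in Q'\}$, $\{(L,P): L \notin Q, P \notin Q'\}$ are each a single $SO(V)$-orbit, so $SO(V)$ has exactly four orbits on the flag variety. -/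
section

variable {k : Type*} [Field k] {V : Type*} [AddCommGroup V] [Module k V]

/-- `g` belongs to `SO(V)`: it preserves the form and has determinant `1`. -/
def InSO (B : LinearMap.BilinForm k V) (g : V ≃ₗ[k] V) : Prop :=
  (∀ u v : V, B (g u) (g v) = B u v) ∧ LinearMap.det (g : V →ₗ[k] V) = 1

/-- `(L, P)` is a full flag: a line inside a plane. -/
def IsFlag (L P : Submodule k V) : Prop :=
  Module.finrank k L = 1 ∧ Module.finrank k P = 2 ∧ L ≤ P

/-- The line `L` is isotropic, i.e. lies on the conic `Q`. -/
def LineIso (B : LinearMap.BilinForm k V) (L : Submodule k V) : Prop :=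
  ∀ x ∈ L, B x x = 0

/-- The plane `P` is tangent to the conic, i.e. `P^⊥ ⊆ P`. -/
def PlaneTan (B : LinearMap.BilinForm k V) (P : Submodule k V) : Prop :=
  ∀ x : V, (∀ y ∈ P, B x y = 0) → x ∈ P

end

/-!
The nondegenerate form identifies each plane with its orthogonal line, so a flag `(L, P)` is given
by nonzero vectors `u ⊥ n` with `L = k ∙ u` and `P = n^⊥ = ker (B n)`; then `L ∈ Q` iff
`B u u = 0`, and `P ∈ Q'` iff `B n n = 0`. In each of the four cases, normalising anisotropic
vectors by square roots and completing isotropic ones to hyperbolic pairs gives a basis adapted to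
the flag whose Gram matrix depends only on the type of the flag. The linear map between adapted
bases of two flags of the same type is an isometry, so its determinant is `±1`, and since `dim V`
is odd one of `±g` lies in `SO(V)`. Conversely, isometries preserve both conditions.
-/

open Module Submodule LinearMap

namespace FlagOrbit

variable {k : Type*} [Field k] {V : Type*} [AddCommGroup V] [Module k V]
  {B : LinearMap.BilinForm k V}

section Isometry

variable {g : V ≃ₗ[k] V} (hg : ∀ u v, B (g u) (g v) = B u v)
include hg

theorem lineIso_map_iff (L : Submodule k V) :
    LineIso B (L.map (g : V →ₗ[k] V)) ↔ LineIso B L := by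
  simp only [LineIso, mem_map_equiv]
  rw [g.surjective.forall]
  simp [hg]

theorem planeTan_map_iff (P : Submodule k V) :
    PlaneTan B (P.map (g : V →ₗ[k] V)) ↔ PlaneTan B P := by
  simp only [PlaneTan, mem_map_equiv]
  rw [g.surjective.forall]
  have (x : V) : (∀ y, g.symm y ∈ P → B (g x) y = 0) ↔ ∀ y ∈ P, B x y = 0 := by
    rw [g.surjective.forall]
    simp [hg]
  simp [this]

end Isometry

section SpecialOrthogonal

variable [FiniteDimensional k V]

theorem det_mul_self_eq_one_of_isometry (hnd : B.Nondegenerate) {f : V →ₗ[k] V}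
    (hf : ∀ u v, B (f u) (f v) = B u v) : LinearMap.det f * LinearMap.det f = 1 := by
  let b := finBasis k V
  have hcomp : B.comp f f = B := LinearMap.ext₂ hf
  have hG := congrArg Matrix.det (LinearMap.BilinForm.toMatrix_comp b b B f f)
  rw [hcomp, Matrix.det_mul, Matrix.det_mul, Matrix.det_transpose, LinearMap.det_toMatrix] at hG
  have hdet := (BilinForm.nondegenerate_iff_det_ne_zero b).mp hnd
  exact mul_left_cancel₀ hdet (by linear_combination -hG)

theorem exists_inSO_map_eq (hnd : B.Nondegenerate) (hodd : Odd (finrank k V))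
    {g₀ : V ≃ₗ[k] V} (hg₀ : ∀ u v, B (g₀ u) (g₀ v) = B u v) :
    ∃ g, InSO B g ∧ ∀ N : Submodule k V, N.map (g : V →ₗ[k] V) = N.map (g₀ : V →ₗ[k] V) := by
  rcases mul_self_eq_one_iff.mp (det_mul_self_eq_one_of_isometry hnd hg₀) with hdet | hdet
  · exact ⟨g₀, ⟨hg₀, hdet⟩, fun _ => rfl⟩
  · let g := g₀.trans (LinearEquiv.neg k)
    have hg : (g : V →ₗ[k] V) = (-1 : k) • (g₀ : V →ₗ[k] V) := by ext; simp [g]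
    refine ⟨g, ⟨fun u v => by simp [g, hg₀], ?_⟩, fun N => ?_⟩
    · rw [hg, LinearMap.det_smul, hdet, hodd.neg_one_pow]
      norm_num
    · rw [hg, Submodule.map_smul _ _ _ (by norm_num)]

theorem exists_inSO_map_span_image {ι : Type*} [Fintype ι] (hnd : B.Nondegenerate)
    (hodd : Odd (finrank k V)) (b₁ b₂ : Basis ι k V)
    (h : ∀ i j, B (b₁ i) (b₁ j) = B (b₂ i) (b₂ j)) :
    ∃ g, InSO B g ∧ ∀ s : Set ι, (span k (b₁ '' s)).map (g : V →ₗ[k] V) = span k (b₂ '' s) := by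
  let g₀ := b₁.equiv b₂ (Equiv.refl ι)
  have hg₀ : ∀ u v, B (g₀ u) (g₀ v) = B u v := by
    have : B.comp (g₀ : V →ₗ[k] V) g₀ = B := b₁.ext fun i => b₁.ext fun j => by simp [g₀, h]
    exact fun u v => LinearMap.congr_fun₂ this u v
  obtain ⟨g, hSO, hmap⟩ := exists_inSO_map_eq hnd hodd hg₀
  refine ⟨g, hSO, fun s => ?_⟩
  rw [hmap, Submodule.map_span, ← Set.image_comp]
  congr 2
  ext i
  simp [g₀]

end SpecialOrthogonal

theorem lineIso_span_singleton_iff {u : V} : LineIso B (k ∙ u) ↔ B u u = 0 := by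
  refine ⟨fun h => h u (mem_span_singleton_self u), fun h x hx => ?_⟩
  obtain ⟨c, rfl⟩ := mem_span_singleton.mp hx
  simp [h]

theorem ker_eq_orthogonal_span_singleton (n : V) : ker (B n) = B.orthogonal (k ∙ n) := by
  rw [BilinForm.orthogonal_span_singleton_eq_toLin_ker]
  rfl

theorem exists_ne_zero_eq_span_singleton {L : Submodule k V} (hL : finrank k L = 1) :
    ∃ u ≠ 0, L = k ∙ u := by
  obtain ⟨u, hu, hu0⟩ := exists_mem_ne_zero_of_ne_bot (p := L) (by rintro rfl; simp at hL)
  exact ⟨u, hu0, eq_span_singleton_of_mem_of_finrank_eq_one hL hu hu0⟩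

theorem linearIndependent_of_det_gram_ne_zero {ι : Type*} [Fintype ι] [DecidableEq ι] {v : ι → V}
    (h : (Matrix.of fun i j => B (v i) (v j)).det ≠ 0) : LinearIndependent k v := by
  rw [Fintype.linearIndependent_iff]
  intro c hc
  refine congrFun (Matrix.eq_zero_of_vecMul_eq_zero h ?_)
  ext j
  have hj := congrArg (fun x => B x (v j)) hc
  simp only [map_sum, map_smul, LinearMap.sum_apply, LinearMap.smul_apply, smul_eq_mul, map_zero,
    LinearMap.zero_apply] at hj
  simpa [Matrix.vecMul, dotProduct] using hj

theorem exists_smul_self_eq_one [IsAlgClosed k] {u : V} (hu : B u u ≠ 0) :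
    ∃ c : k, c ≠ 0 ∧ B (c • u) (c • u) = 1 := by
  obtain ⟨s, hs⟩ := IsAlgClosed.exists_eq_mul_self (B u u)
  have hs0 : s ≠ 0 := by rintro rfl; simp [hs] at hu
  refine ⟨s⁻¹, inv_ne_zero hs0, ?_⟩
  simp only [map_smul, LinearMap.smul_apply, smul_eq_mul, hs]
  field_simp

theorem exists_isotropic [IsAlgClosed k] (hchar : (2 : k) ≠ 0) (hdim : 1 < finrank k V) :
    ∃ e : V, e ≠ 0 ∧ B e e = 0 := by
  have : Nontrivial V := Module.nontrivial_of_finrank_pos (R := k) (by omega)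
  obtain ⟨x, hx⟩ := exists_ne (0 : V)
  by_cases hxx : B x x = 0
  · exact ⟨x, hx, hxx⟩
  obtain ⟨y, hli⟩ := exists_linearIndependent_pair_of_one_lt_finrank hdim hx
  have : NeZero (2 : k) := ⟨hchar⟩
  obtain ⟨t, ht⟩ := exists_quadratic_eq_zero hxx
    (IsAlgClosed.exists_eq_mul_self (discrim (B x x) (B x y + B y x) (B y y)))
  refine ⟨t • x + y, fun h => ?_, ?_⟩
  · simpa using LinearIndependent.pair_iff.mp hli t 1 (by simpa using h)
  · simp only [map_add, map_smul, LinearMap.add_apply, LinearMap.smul_apply, smul_eq_mul]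
    linear_combination ht

theorem exists_hyperbolic_partner (hchar : (2 : k) ≠ 0) (hsymm : ∀ x y : V, B x y = B y x)
    (hnd : B.Nondegenerate) {e w : V} (he : e ≠ 0) (hee : B e e = 0) (hew : B e w = 0)
    (hww : B w w = 1) : ∃ f, B e f = 1 ∧ B f f = 0 ∧ B w f = 0 := by
  obtain ⟨y, hy⟩ : ∃ y, B e y ≠ 0 := by
    by_contra! h
    exact he (hnd.1 e h)
  set y₁ := y - B w y • w
  set a := B e y
  have hey₁ : B e y₁ = a := by simp [y₁, a, hew]
  have hwy₁ : B w y₁ = 0 := by simp [y₁, hww]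
  have hwe : B w e = 0 := by rw [hsymm, hew]
  refine ⟨a⁻¹ • y₁ - (B y₁ y₁ / (2 * a ^ 2)) • e, ?_, ?_, ?_⟩
  · simp [hey₁, hee, hy]
  · simp only [map_sub, map_smul, LinearMap.sub_apply, LinearMap.smul_apply, smul_eq_mul,
      hey₁, hee, hsymm y₁ e]
    field_simp
    ring
  · simp [hwy₁, hwe]

section Duality

variable [FiniteDimensional k V]

theorem eq_span_pair_of_linearIndependent {P : Submodule k V} (hP : finrank k P = 2) {x y : V}
    (hx : x ∈ P) (hy : y ∈ P) (hli : LinearIndependent k ![x, y]) : P = span k {x, y} := by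
  have hspan : finrank k (span k {x, y}) = 2 := by
    rw [← Matrix.range_cons_cons_empty x y ![], finrank_span_eq_card hli, Fintype.card_fin]
  refine (eq_of_le_of_finrank_le ?_ (by rw [hP, hspan])).symm
  rw [span_le, Set.insert_subset_iff, Set.singleton_subset_iff]
  exact ⟨hx, hy⟩

theorem finrank_ker_add_one (hnd : B.Nondegenerate) {n : V} (hn : n ≠ 0) :
    finrank k (ker (B n)) + 1 = finrank k V := by
  have hpos : 0 < finrank k V := finrank_pos_iff_exists_ne_zero.mpr ⟨n, hn⟩
  rw [ker_eq_orthogonal_span_singleton, BilinForm.finrank_orthogonal hnd,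
    finrank_span_singleton hn]
  omega

theorem isFlag_span_singleton_ker (hnd : B.Nondegenerate) (hdim : finrank k V = 3) {u n : V}
    (hu : u ≠ 0) (hn : n ≠ 0) (hnu : B n u = 0) : IsFlag (k ∙ u) (ker (B n)) :=
  ⟨finrank_span_singleton hu, by have := finrank_ker_add_one hnd hn; omega,
    (span_singleton_le_iff_mem u _).mpr hnu⟩

theorem exists_mem_ker_notMem_span_singleton (hnd : B.Nondegenerate) (hdim : finrank k V = 3)
    {n : V} (hn : n ≠ 0) (x : V) : ∃ q, B n q = 0 ∧ q ∉ k ∙ x := by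
  by_contra! h
  have hle := Submodule.finrank_mono (show ker (B n) ≤ k ∙ x from h)
  have := finrank_ker_add_one hnd hn
  have : finrank k (k ∙ x) ≤ 1 := by simpa using finrank_span_le_card (R := k) ({x} : Set V)
  omega

theorem mem_span_singleton_of_ker_le (hsymm : ∀ x y : V, B x y = B y x) (hnd : B.Nondegenerate)
    {n z : V} (h : ker (B n) ≤ ker (B z)) : z ∈ k ∙ n := by
  have hrefl : B.IsRefl := fun x y hxy => by rwa [hsymm]
  rw [← BilinForm.orthogonal_orthogonal hnd hrefl (k ∙ n), ← ker_eq_orthogonal_span_singleton]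
  intro m hm
  rw [hsymm]
  exact h hm

theorem exists_ne_zero_eq_ker (hsymm : ∀ x y : V, B x y = B y x) (hnd : B.Nondegenerate)
    {P : Submodule k V} (hP : finrank k P + 1 = finrank k V) : ∃ n ≠ 0, P = ker (B n) := by
  have hrefl : B.IsRefl := fun x y hxy => by rwa [hsymm]
  have hperp : finrank k (B.orthogonal P) = 1 := by
    rw [BilinForm.finrank_orthogonal hnd]
    omega
  obtain ⟨n, hn, hPn⟩ := exists_ne_zero_eq_span_singleton hperp
  refine ⟨n, hn, ?_⟩
  rw [ker_eq_orthogonal_span_singleton, ← hPn, BilinForm.orthogonal_orthogonal hnd hrefl]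

theorem planeTan_ker_iff (hsymm : ∀ x y : V, B x y = B y x) (hnd : B.Nondegenerate) {n : V} :
    PlaneTan B (ker (B n)) ↔ B n n = 0 := by
  refine ⟨fun h => h n fun y hy => hy, fun hnn x hx => ?_⟩
  obtain ⟨c, rfl⟩ := mem_span_singleton.mp (mem_span_singleton_of_ker_le hsymm hnd hx)
  simp [hnn]

theorem mem_span_singleton_of_orthogonal_pair (hsymm : ∀ x y : V, B x y = B y x)
    (hnd : B.Nondegenerate) (hdim : finrank k V = 3) {n x y z : V} (hn : n ≠ 0)
    (hx : B n x = 0) (hy : B n y = 0) (hli : LinearIndependent k ![x, y])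
    (hzx : B z x = 0) (hzy : B z y = 0) : z ∈ k ∙ n := by
  have hker : ker (B n) = span k {x, y} :=
    eq_span_pair_of_linearIndependent (by have := finrank_ker_add_one hnd hn; omega) hx hy hli
  refine mem_span_singleton_of_ker_le hsymm hnd ?_
  rw [hker, span_le, Set.insert_subset_iff, Set.singleton_subset_iff]
  exact ⟨hzx, hzy⟩

theorem exists_eq_span_singleton_ker (hsymm : ∀ x y : V, B x y = B y x) (hnd : B.Nondegenerate)
    (hdim : finrank k V = 3) {L P : Submodule k V} (h : IsFlag L P) :
    ∃ u n, u ≠ 0 ∧ n ≠ 0 ∧ B n u = 0 ∧ L = k ∙ u ∧ P = ker (B n) := by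
  obtain ⟨hL, hP, hLP⟩ := h
  obtain ⟨u, hu, rfl⟩ := exists_ne_zero_eq_span_singleton hL
  obtain ⟨n, hn, rfl⟩ := exists_ne_zero_eq_ker hsymm hnd (P := P) (by omega)
  exact ⟨u, n, hu, hn, hLP (mem_span_singleton_self u), rfl, rfl⟩

end Duality

open Classical in
/-- The Gram matrices of `(e, w, f)`, `(e, f, w)` and `(w, e, f)`, for a hyperbolic pair `e, f`
and a unit vector `w` orthogonal to both, and of an orthonormal basis. -/
noncomputable def flagGram (iso tan : Prop) : Matrix (Fin 3) (Fin 3) k :=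
  if iso then if tan then !![0, 0, 1; 0, 1, 0; 1, 0, 0] else !![0, 1, 0; 1, 0, 0; 0, 0, 1]
  else if tan then !![1, 0, 0; 0, 0, 1; 0, 1, 0] else 1

theorem det_flagGram_ne_zero (iso tan : Prop) :
    (flagGram iso tan : Matrix (Fin 3) (Fin 3) k).det ≠ 0 := by
  unfold flagGram
  split_ifs <;> simp [Matrix.det_fin_three]

def IsNormalFrame (B : LinearMap.BilinForm k V) (u n : V) (v : Fin 3 → V) : Prop :=
  k ∙ v 0 = k ∙ u ∧ B n (v 0) = 0 ∧ B n (v 1) = 0 ∧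
    ∀ i j, B (v i) (v j) = flagGram (B u u = 0) (B n n = 0) i j

theorem IsNormalFrame.exists_basis [FiniteDimensional k V] (hnd : B.Nondegenerate)
    (hdim : finrank k V = 3) {u n : V} {v : Fin 3 → V} (hn : n ≠ 0) (hv : IsNormalFrame B u n v) :
    ∃ b : Basis (Fin 3) k V, ⇑b = v ∧ ker (B n) = span k {v 0, v 1} := by
  obtain ⟨-, h0, h1, hG⟩ := hv
  have hli : LinearIndependent k v := by
    refine linearIndependent_of_det_gram_ne_zero (B := B) ?_
    convert det_flagGram_ne_zero (k := k) (B u u = 0) (B n n = 0) using 2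
    ext i j
    exact hG i j
  refine ⟨basisOfLinearIndependentOfCardEqFinrank hli (by simp [hdim]), by simp,
    eq_span_pair_of_linearIndependent (by have := finrank_ker_add_one hnd hn; omega) h0 h1 ?_⟩
  convert hli.comp ![0, 1] (by decide) using 1
  ext i
  fin_cases i <;> rfl

theorem exists_hyperbolic_completion [FiniteDimensional k V] [IsAlgClosed k] (hchar : (2 : k) ≠ 0)
    (hsymm : ∀ x y : V, B x y = B y x) (hnd : B.Nondegenerate) (hdim : finrank k V = 3) {e : V}
    (he : e ≠ 0) (hee : B e e = 0) :
    ∃ w f, B e w = 0 ∧ B w w = 1 ∧ B e f = 1 ∧ B f f = 0 ∧ B w f = 0 := by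
  obtain ⟨q, heq, hq⟩ := exists_mem_ker_notMem_span_singleton hnd hdim he e
  have hli : LinearIndependent k ![e, q] :=
    (LinearIndependent.pair_iff' he).mpr fun a ha => hq (mem_span_singleton.mpr ⟨a, ha⟩)
  have hqq : B q q ≠ 0 := fun hqq => hq <|
    mem_span_singleton_of_orthogonal_pair hsymm hnd hdim he hee heq hli (by rw [hsymm, heq]) hqq
  obtain ⟨c, -, hw⟩ := exists_smul_self_eq_one hqq
  have hew : B e (c • q) = 0 := by simp [heq]
  obtain ⟨f, hef, hff, hwf⟩ := exists_hyperbolic_partner hchar hsymm hnd he hee hew hw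
  exact ⟨c • q, f, hew, hw, hef, hff, hwf⟩

theorem exists_isNormalFrame_isotropic_tangent [FiniteDimensional k V] [IsAlgClosed k]
    (hchar : (2 : k) ≠ 0) (hsymm : ∀ x y : V, B x y = B y x) (hnd : B.Nondegenerate)
    (hdim : finrank k V = 3) {u n : V} (hu : u ≠ 0) (hn : n ≠ 0) (hnu : B n u = 0)
    (huu : B u u = 0) (hnn : B n n = 0) : ∃ v, IsNormalFrame B u n v := by
  -- the tangent plane `n^⊥` contains no isotropic line other than `k ∙ n`
  obtain ⟨c, hcu⟩ : ∃ c : k, c • n = u := by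
    by_contra! h
    obtain ⟨c, hc⟩ := mem_span_singleton.mp <| mem_span_singleton_of_orthogonal_pair hsymm hnd
      hdim hn hnn hnu ((LinearIndependent.pair_iff' hn).mpr h) (by rw [hsymm, hnu]) huu
    exact h c hc
  obtain ⟨w, f, huw, hww, huf, hff, hwf⟩ :=
    exists_hyperbolic_completion hchar hsymm hnd hdim hu huu
  have hnw : B n w = 0 := by
    have hc : c ≠ 0 := by rintro rfl; simp [← hcu] at hu
    simpa [← hcu, hc] using huw
  refine ⟨![u, w, f], rfl, hnu, hnw, fun i j => ?_⟩
  rw [flagGram, if_pos huu, if_pos hnn]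
  fin_cases i <;> fin_cases j <;> simp [huu, huw, huf, hww, hwf, hff, hsymm w u, hsymm f u,
    hsymm f w]

theorem exists_isNormalFrame_isotropic_secant [IsAlgClosed k] (hchar : (2 : k) ≠ 0)
    (hsymm : ∀ x y : V, B x y = B y x) (hnd : B.Nondegenerate) {u n : V} (hu : u ≠ 0)
    (hnu : B n u = 0) (huu : B u u = 0) (hnn : B n n ≠ 0) : ∃ v, IsNormalFrame B u n v := by
  obtain ⟨c, hc, hww⟩ := exists_smul_self_eq_one hnn
  set w := c • n with hw
  have huw : B u w = 0 := by simp [hw, hsymm u n, hnu]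
  obtain ⟨f, huf, hff, hwf⟩ := exists_hyperbolic_partner hchar hsymm hnd hu huu huw hww
  have hnf : B n f = 0 := by simpa [hw, hc] using hwf
  clear_value w
  refine ⟨![u, f, w], rfl, hnu, hnf, fun i j => ?_⟩
  rw [flagGram, if_pos huu, if_neg hnn]
  fin_cases i <;> fin_cases j <;> simp [huu, huw, huf, hww, hwf, hff, hsymm w u, hsymm f u,
    hsymm f w]

theorem exists_isNormalFrame_anisotropic_tangent [IsAlgClosed k] (hchar : (2 : k) ≠ 0)
    (hsymm : ∀ x y : V, B x y = B y x) (hnd : B.Nondegenerate) {u n : V} (hn : n ≠ 0)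
    (hnu : B n u = 0) (huu : B u u ≠ 0) (hnn : B n n = 0) : ∃ v, IsNormalFrame B u n v := by
  obtain ⟨c, hc, hww⟩ := exists_smul_self_eq_one huu
  set w := c • u with hw
  have hnw : B n w = 0 := by simp [hw, hnu]
  obtain ⟨f, hnf, hff, hwf⟩ := exists_hyperbolic_partner hchar hsymm hnd hn hnn hnw hww
  have hspan : k ∙ w = k ∙ u := span_singleton_smul_eq (IsUnit.mk0 c hc) u
  clear_value w
  refine ⟨![w, n, f], hspan, hnw, hnn, fun i j => ?_⟩
  rw [flagGram, if_neg huu, if_pos hnn]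
  fin_cases i <;> fin_cases j <;> simp [hnn, hnw, hnf, hww, hwf, hff, hsymm w n, hsymm f n,
    hsymm f w]

theorem exists_unit_orthogonal_mem_ker [FiniteDimensional k V] [IsAlgClosed k]
    (hsymm : ∀ x y : V, B x y = B y x) (hnd : B.Nondegenerate) (hdim : finrank k V = 3)
    {e n : V} (hn : n ≠ 0) (hnn : B n n ≠ 0) (hne : B n e = 0) (hee : B e e = 1) :
    ∃ f, B n f = 0 ∧ B e f = 0 ∧ B f f = 1 := by
  have he : e ≠ 0 := by rintro rfl; simp at hee
  obtain ⟨q, hnq, hq⟩ := exists_mem_ker_notMem_span_singleton hnd hdim hn e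
  set z := q - B e q • e with hz
  have hez : B e z = 0 := by simp [hz, hee]
  have hnz : B n z = 0 := by simp [hz, hnq, hne]
  have hli : LinearIndependent k ![e, z] := by
    refine (LinearIndependent.pair_iff' he).mpr fun a ha => hq (mem_span_singleton.mpr ?_)
    exact ⟨a + B e q, by rw [add_smul, ha, hz, sub_add_cancel]⟩
  have hzz : B z z ≠ 0 := by
    intro hzz
    obtain ⟨d, hdz⟩ := mem_span_singleton.mp <| mem_span_singleton_of_orthogonal_pair hsymm hnd
      hdim hn hne hnz hli (by rw [hsymm, hez]) hzz
    have hd : d = 0 := by simpa [← hdz, hnn] using hnz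
    exact hli.ne_zero 1 (by simp [← hdz, hd])
  obtain ⟨c, -, hff⟩ := exists_smul_self_eq_one hzz
  exact ⟨c • z, by simp [hnz], by simp [hez], hff⟩

theorem exists_isNormalFrame_anisotropic_secant [FiniteDimensional k V] [IsAlgClosed k]
    (hsymm : ∀ x y : V, B x y = B y x) (hnd : B.Nondegenerate) (hdim : finrank k V = 3)
    {u n : V} (hn : n ≠ 0) (hnu : B n u = 0) (huu : B u u ≠ 0) (hnn : B n n ≠ 0) :
    ∃ v, IsNormalFrame B u n v := by
  obtain ⟨c, hc, hee⟩ := exists_smul_self_eq_one huu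
  obtain ⟨c', -, hww⟩ := exists_smul_self_eq_one hnn
  set e := c • u with he
  set w := c' • n with hw
  have hne : B n e = 0 := by simp [he, hnu]
  have hew : B e w = 0 := by simp [hw, hsymm e n, hne]
  obtain ⟨f, hnf, hef, hff⟩ := exists_unit_orthogonal_mem_ker hsymm hnd hdim hn hnn hne hee
  have hfw : B f w = 0 := by simp [hw, hsymm f n, hnf]
  have hspan : k ∙ e = k ∙ u := span_singleton_smul_eq (IsUnit.mk0 c hc) u
  clear_value e w
  refine ⟨![e, f, w], hspan, hne, hnf, fun i j => ?_⟩
  rw [flagGram, if_neg huu, if_neg hnn]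
  fin_cases i <;> fin_cases j <;> simp [hee, hef, hew, hff, hfw, hww, hsymm f e, hsymm w e,
    hsymm w f]

theorem exists_isNormalFrame [FiniteDimensional k V] [IsAlgClosed k] (hchar : (2 : k) ≠ 0)
    (hsymm : ∀ x y : V, B x y = B y x) (hnd : B.Nondegenerate) (hdim : finrank k V = 3) {u n : V}
    (hu : u ≠ 0) (hn : n ≠ 0) (hnu : B n u = 0) : ∃ v, IsNormalFrame B u n v := by
  by_cases huu : B u u = 0 <;> by_cases hnn : B n n = 0
  · exact exists_isNormalFrame_isotropic_tangent hchar hsymm hnd hdim hu hn hnu huu hnn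
  · exact exists_isNormalFrame_isotropic_secant hchar hsymm hnd hu hnu huu hnn
  · exact exists_isNormalFrame_anisotropic_tangent hchar hsymm hnd hn hnu huu hnn
  · exact exists_isNormalFrame_anisotropic_secant hsymm hnd hdim hn hnu huu hnn

theorem exists_basis_flagGram [FiniteDimensional k V] [IsAlgClosed k] (hchar : (2 : k) ≠ 0)
    (hsymm : ∀ x y : V, B x y = B y x) (hnd : B.Nondegenerate) (hdim : finrank k V = 3)
    {L P : Submodule k V} (h : IsFlag L P) :
    ∃ b : Basis (Fin 3) k V, L = k ∙ b 0 ∧ P = span k {b 0, b 1} ∧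
      ∀ i j, B (b i) (b j) = flagGram (LineIso B L) (PlaneTan B P) i j := by
  obtain ⟨u, n, hu, hn, hnu, rfl, rfl⟩ := exists_eq_span_singleton_ker hsymm hnd hdim h
  obtain ⟨v, hv⟩ := exists_isNormalFrame hchar hsymm hnd hdim hu hn hnu
  obtain ⟨b, rfl, hker⟩ := hv.exists_basis hnd hdim hn
  rw [lineIso_span_singleton_iff, planeTan_ker_iff hsymm hnd]
  exact ⟨b, hv.1.symm, hker, hv.2.2.2⟩

theorem exists_isFlag_lineIso_iff_planeTan_iff [FiniteDimensional k V] [IsAlgClosed k]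
    (hchar : (2 : k) ≠ 0) (hsymm : ∀ x y : V, B x y = B y x) (hnd : B.Nondegenerate)
    (hdim : finrank k V = 3) (p q : Prop) :
    ∃ L P : Submodule k V, IsFlag L P ∧ (LineIso B L ↔ p) ∧ (PlaneTan B P ↔ q) := by
  suffices ∃ u n, u ≠ 0 ∧ n ≠ 0 ∧ B n u = 0 ∧ (B u u = 0 ↔ p) ∧ (B n n = 0 ↔ q) by
    obtain ⟨u, n, hu, hn, hnu, hp, hq⟩ := this
    refine ⟨k ∙ u, ker (B n), isFlag_span_singleton_ker hnd hdim hu hn hnu, ?_, ?_⟩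
    · rwa [lineIso_span_singleton_iff]
    · rwa [planeTan_ker_iff hsymm hnd]
  obtain ⟨e, he, hee⟩ := exists_isotropic (B := B) hchar (by omega)
  obtain ⟨w, f, hew, hww, hef, hff, hwf⟩ :=
    exists_hyperbolic_completion hchar hsymm hnd hdim he hee
  have hww' : B w w ≠ 0 := by rw [hww]; exact one_ne_zero
  have hdd : B (e - f) (e - f) ≠ 0 := by
    simp only [map_sub, LinearMap.sub_apply, hee, hff, hef, hsymm f e]
    exact fun h => hchar (by linear_combination -h)
  have hw : w ≠ 0 := fun h => hww' (by simp [h])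
  have hd : e - f ≠ 0 := fun h => hdd (by simp [h])
  by_cases hp : p <;> by_cases hq : q
  · exact ⟨e, e, he, he, hee, iff_of_true hee hp, iff_of_true hee hq⟩
  · exact ⟨e, w, he, hw, by rw [hsymm, hew], iff_of_true hee hp, iff_of_false hww' hq⟩
  · exact ⟨w, e, hw, he, hew, iff_of_false hww' hp, iff_of_true hee hq⟩
  · exact ⟨w, e - f, hw, hd, by simp [hew, hsymm f w, hwf], iff_of_false hww' hp,
      iff_of_false hdd hq⟩

end FlagOrbit

/-- for `V` three-dimensional over an algebraically closed field of
characteristic `≠ 2` with a nondegenerate symmetric bilinear form, `SO(V)` has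
exactly four orbits on the flag variety, given by whether `L` is isotropic and
whether `P` is tangent: two flags lie in the same `SO(V)`-orbit iff they have the
same type, and each of the four types is realized. -/
theorem stmt_14 (k : Type*) [Field k] [IsAlgClosed k] (hchar : (2 : k) ≠ 0)
    (V : Type*) [AddCommGroup V] [Module k V] [FiniteDimensional k V]
    (hdim : Module.finrank k V = 3)
    (B : LinearMap.BilinForm k V)
    (hsymm : ∀ x y : V, B x y = B y x) (hnd : B.Nondegenerate) :
    (∀ L₁ P₁ L₂ P₂ : Submodule k V, IsFlag L₁ P₁ → IsFlag L₂ P₂ →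
      ((∃ g : V ≃ₗ[k] V, InSO B g ∧
          Submodule.map (g : V →ₗ[k] V) L₁ = L₂ ∧
          Submodule.map (g : V →ₗ[k] V) P₁ = P₂) ↔
        ((LineIso B L₁ ↔ LineIso B L₂) ∧ (PlaneTan B P₁ ↔ PlaneTan B P₂)))) ∧
    (∀ b c : Bool, ∃ L P : Submodule k V, IsFlag L P ∧
      (LineIso B L ↔ b = true) ∧ (PlaneTan B P ↔ c = true)) := by
  refine ⟨fun L₁ P₁ L₂ P₂ h₁ h₂ => ⟨?_, fun ⟨hL, hP⟩ => ?_⟩, fun b c =>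
    FlagOrbit.exists_isFlag_lineIso_iff_planeTan_iff hchar hsymm hnd hdim (b = true) (c = true)⟩
  · rintro ⟨g, ⟨hg, -⟩, rfl, rfl⟩
    exact ⟨(FlagOrbit.lineIso_map_iff hg L₁).symm, (FlagOrbit.planeTan_map_iff hg P₁).symm⟩
  · obtain ⟨b₁, rfl, rfl, hb₁⟩ := FlagOrbit.exists_basis_flagGram hchar hsymm hnd hdim h₁
    obtain ⟨b₂, rfl, rfl, hb₂⟩ := FlagOrbit.exists_basis_flagGram hchar hsymm hnd hdim h₂
    obtain ⟨g, hg, hmap⟩ := FlagOrbit.exists_inSO_map_span_image hnd (by rw [hdim]; decide)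
      b₁ b₂ fun i j => by rw [hb₁, hb₂, propext hL, propext hP]
    exact ⟨g, hg, by simpa using hmap {0}, by simpa [Set.image_pair] using hmap {0, 1}⟩
end

section
/- Let $V$ be a $2n$-dimensional symplectic vector space over an algebraically closed field $k$ of characteristic $0$, and $E_0$ the set of nilpotent symplectically self-adjoint endomorphisms of $V$. Then every $T \in E_0$ has Jordan blocks occurring in pairs: there is a partition $n_1 \geq n_2 \geq \cdots \geq n_t$ of $n$ such that the Jordan type of $T$ is $(n_1,n_1,n_2,n_2,\ldots,n_t,n_t)$. -/
/-! The form `(x, y) ↦ ω (T^i x) y` is skew-symmetric with radical `ker T^i`, so it induces a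
nondegenerate skew form on `V ⧸ ker T^i`, which therefore has even dimension; as `dim V` is even,
every `dim ker T^i` is even. The increments
`dim ker T^(i+1) - dim ker T^i = dim (ker T ⊓ range T^i)` (the number of Jordan blocks of size
`> i`) are hence even and nonincreasing, and half of them are the column lengths of a partition
of `n`; the list of its row lengths is the required one. -/

open Module

theorem List.exists_pairwise_ge_countP_eq_of_antitone (N : ℕ) {c : ℕ → ℕ} (hc : Antitone c)
    (hN : ∀ i, N ≤ i → c i = 0) :
    ∃ l : List ℕ, l.Pairwise (· ≥ ·) ∧ (∀ m ∈ l, 1 ≤ m) ∧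
      l.sum = ∑ i ∈ Finset.range N, c i ∧ ∀ i, l.countP (fun m => i + 1 ≤ m) = c i := by
  induction N generalizing c with
  | zero =>
    exact ⟨[], by simp, by simp, by simp, fun i => by simp [hN i (Nat.zero_le i)]⟩
  | succ N ih =>
    -- add a first column of height `c 0` to the diagram whose column heights are `c 1, c 2, …`
    obtain ⟨l, hsorted, hpos, hsum, hcount⟩ :=
      ih (fun i j hij => hc (by omega : i + 1 ≤ j + 1)) fun i hi => hN (i + 1) (by omega)
    have hlen : l.length = c 1 := by
      rw [← hcount 0, List.countP_eq_length.2 fun m hm => by simpa using hpos m hm]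
    have hc10 : c 1 ≤ c 0 := hc (Nat.zero_le 1)
    have hpos' : ∀ m ∈ l.map (· + 1) ++ List.replicate (c 0 - c 1) 1, 1 ≤ m := by
      simp only [List.mem_append, List.mem_map, List.mem_replicate]
      rintro _ (⟨m, -, rfl⟩ | ⟨-, rfl⟩) <;> omega
    refine ⟨_, ?_, hpos', ?_, ?_⟩
    · rw [List.pairwise_append, List.pairwise_map]
      refine ⟨hsorted.imp (by omega), List.pairwise_replicate.2 (Or.inr le_rfl), ?_⟩
      simp only [List.mem_map, List.mem_replicate]
      rintro _ ⟨m, hm, rfl⟩ _ ⟨-, rfl⟩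
      simp
    · rw [List.sum_append, List.sum_map_add, List.map_id', hsum, Finset.sum_range_succ']
      simp only [List.map_const', hlen, List.sum_replicate, smul_eq_mul, mul_one]
      omega
    · rintro (_ | i)
      · rw [List.countP_eq_length.2 fun m hm => by simpa using hpos' m hm, List.length_append,
          List.length_map, List.length_replicate, hlen]
        omega
      · rw [List.countP_append, ← hcount i]
        simp [List.countP_map, Function.comp_def]

namespace LinearMap

section CommRing

variable {R M : Type*} [CommRing R] [AddCommGroup M] [Module R M]

theorem IsAdjointPair.pow {B : LinearMap.BilinForm R M} {f : Module.End R M}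
    (h : IsAdjointPair B B f f) (i : ℕ) : IsAdjointPair B B ⇑(f ^ i) ⇑(f ^ i) := by
  induction i with
  | zero => exact isAdjointPair_one
  | succ i ih => simpa only [← pow_succ, (Commute.self_pow f i).eq] using ih.mul h

theorem BilinForm.nondegenerate_restrict_of_isCompl_ker {B : LinearMap.BilinForm R M}
    (hskew : ∀ x y, B x y = -B y x) {W : Submodule R M} (hW : IsCompl (ker B) W) :
    (B.restrict W).Nondegenerate := by
  have hrefl : (B.restrict W).IsRefl := fun x y hxy => by
    simp only [BilinForm.restrict_apply, domRestrict_apply] at hxy ⊢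
    rw [hskew, hxy, neg_zero]
  refine hrefl.nondegenerate_iff_separatingLeft.2 fun w hw => ?_
  have hBw : B w = 0 := by
    ext x
    obtain ⟨s, hs, w', hw', rfl⟩ :=
      Submodule.mem_sup.1 (hW.sup_eq_top ▸ Submodule.mem_top : x ∈ _)
    rw [map_add, hskew, mem_ker.1 hs, LinearMap.zero_apply, neg_zero, zero_add]
    exact hw ⟨w', hw'⟩
  exact Subtype.ext (Submodule.disjoint_def.1 hW.disjoint _ (mem_ker.2 hBw) w.2)

end CommRing

namespace BilinForm

variable {K V : Type*} [Field K] [NeZero (2 : K)] [AddCommGroup V] [Module K V]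
  [FiniteDimensional K V]

theorem even_finrank_of_nondegenerate_of_skew {B : LinearMap.BilinForm K V}
    (hB : B.Nondegenerate) (hskew : ∀ x y, B x y = -B y x) : Even (finrank K V) := by
  let b := Module.finBasis K V
  set A := LinearMap.BilinForm.toMatrix b B
  have hAt : A.transpose = -A := by
    ext p q
    exact hskew _ _
  have hdet : A.det ≠ 0 := (nondegenerate_iff_det_ne_zero b).1 hB
  by_contra hodd
  have hdet_neg : A.det = -A.det := by
    conv_lhs => rw [← Matrix.det_transpose, hAt, Matrix.det_neg, Fintype.card_fin]
    rw [(Nat.not_even_iff_odd.1 hodd).neg_one_pow, neg_one_mul]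
  have : (2 : K) * A.det = 0 := by linear_combination hdet_neg
  exact hdet ((mul_eq_zero.1 this).resolve_left two_ne_zero)

theorem even_finrank_quotient_ker_of_skew {B : LinearMap.BilinForm K V}
    (hskew : ∀ x y, B x y = -B y x) : Even (finrank K (V ⧸ ker B)) := by
  obtain ⟨W, hW⟩ := Submodule.exists_isCompl (ker B)
  rw [(Submodule.quotientEquivOfIsCompl _ _ hW).finrank_eq]
  exact even_finrank_of_nondegenerate_of_skew (nondegenerate_restrict_of_isCompl_ker hskew hW)
    fun x y => hskew x y

theorem even_finrank_ker_of_isAdjointPair {ω : LinearMap.BilinForm K V} (halt : ω.IsAlt)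
    (hnd : ω.Nondegenerate) (hV : Even (finrank K V)) {S : Module.End K V}
    (hS : IsAdjointPair ω ω S S) : Even (finrank K (ker S)) := by
  have hskew : ∀ x y, (ω ∘ₗ S) x y = -(ω ∘ₗ S) y x := fun x y => by
    rw [LinearMap.comp_apply, LinearMap.comp_apply, hS, LinearMap.IsAlt.neg halt]
  have hker : ker (ω ∘ₗ S) = ker S :=
    ker_comp_of_ker_eq_bot _ (separatingLeft_iff_ker_eq_bot.1 hnd.1)
  have hsum := (ker (ω ∘ₗ S)).finrank_quotient_add_finrank
  rw [← hsum, Nat.even_add, hker] at hV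
  exact hV.1 (hker ▸ even_finrank_quotient_ker_of_skew hskew)

end BilinForm

end LinearMap

namespace Module.End

variable {K V : Type*} [Field K] [AddCommGroup V] [Module K V] [FiniteDimensional K V]
  (T : Module.End K V)

theorem finrank_ker_pow_succ (i : ℕ) :
    finrank K (LinearMap.ker (T ^ (i + 1))) = finrank K (LinearMap.ker (T ^ i)) +
      finrank K (LinearMap.ker T ⊓ LinearMap.range (T ^ i) : Submodule K V) := by
  let g := (T ^ i) ∘ₗ (LinearMap.ker (T ^ (i + 1))).subtype
  have hker : LinearMap.ker (T ^ i) ≤ LinearMap.ker (T ^ (i + 1)) := by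
    rw [pow_succ', mul_eq_comp]
    exact LinearMap.ker_le_ker_comp _ _
  have hrange : LinearMap.range g = LinearMap.ker T ⊓ LinearMap.range (T ^ i) := by
    ext y
    simp only [g, LinearMap.range_comp, Submodule.range_subtype, Submodule.mem_map,
      Submodule.mem_inf, LinearMap.mem_ker, LinearMap.mem_range]
    constructor
    · rintro ⟨x, hx, rfl⟩
      exact ⟨by rwa [← mul_apply, ← pow_succ'], x, rfl⟩
    · rintro ⟨hy, x, rfl⟩
      exact ⟨x, by rwa [pow_succ', mul_apply], rfl⟩
  have hkerg : LinearMap.ker g =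
      (LinearMap.ker (T ^ i)).comap (LinearMap.ker (T ^ (i + 1))).subtype :=
    LinearMap.ker_comp _ _
  rw [← g.finrank_range_add_finrank_ker, hrange, hkerg,
    (Submodule.comapSubtypeEquivOfLe hker).finrank_eq, add_comm]

theorem finrank_ker_pow_eq_sum (N : ℕ) :
    finrank K (LinearMap.ker (T ^ N)) = ∑ i ∈ Finset.range N,
      finrank K (LinearMap.ker T ⊓ LinearMap.range (T ^ i) : Submodule K V) := by
  induction N with
  | zero => simp [one_eq_id]
  | succ N ih => rw [finrank_ker_pow_succ, ih, Finset.sum_range_succ]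

theorem antitone_finrank_ker_inf_range_pow :
    Antitone fun i => finrank K (LinearMap.ker T ⊓ LinearMap.range (T ^ i) : Submodule K V) :=
  antitone_nat_of_succ_le fun i => Submodule.finrank_mono <| inf_le_inf_left _ <| by
    rw [pow_succ, mul_eq_comp]
    exact LinearMap.range_comp_le_range _ _

end Module.End

theorem stmt_19_general (k : Type*) [Field k] [CharZero k]
    (V : Type*) [AddCommGroup V] [Module k V] [FiniteDimensional k V]
    (n : ℕ) (hdim : Module.finrank k V = 2 * n)
    (ω : LinearMap.BilinForm k V)
    (halt : ∀ x : V, ω x x = 0) (hnd : ω.Nondegenerate)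
    (T : V →ₗ[k] V)
    (hsa : ∀ x y : V, ω (T x) y = ω x (T y)) (hnil : IsNilpotent T) :
    ∃ l : List ℕ, l.Pairwise (· ≥ ·) ∧ l.sum = n ∧ (∀ m ∈ l, 1 ≤ m) ∧
      ∀ i : ℕ,
        Module.finrank k (LinearMap.ker (T ^ (i + 1))) -
            Module.finrank k (LinearMap.ker (T ^ i)) =
          2 * l.countP (fun m => i + 1 ≤ m) := by
  obtain ⟨N, hN⟩ := hnil
  set d : ℕ → ℕ := fun i =>
    finrank k (LinearMap.ker T ⊓ LinearMap.range (T ^ i) : Submodule k V)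
  have hker_even (i : ℕ) : Even (finrank k (LinearMap.ker (T ^ i))) :=
    LinearMap.BilinForm.even_finrank_ker_of_isAdjointPair halt hnd ⟨n, by omega⟩
      (LinearMap.IsAdjointPair.pow hsa i)
  have hd_even (i : ℕ) : Even (d i) := by
    have := hker_even (i + 1)
    rw [Module.End.finrank_ker_pow_succ, Nat.even_add] at this
    exact this.1 (hker_even i)
  have hd_antitone : Antitone fun i => d i / 2 := fun i j hij =>
    Nat.div_le_div_right (Module.End.antitone_finrank_ker_inf_range_pow T hij)
  have hd_zero (i : ℕ) (hi : N ≤ i) : d i / 2 = 0 := by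
    suffices d i = 0 by rw [this]
    simp [d, pow_eq_zero_of_le hi hN]
  have hd_sum : ∑ i ∈ Finset.range N, d i = 2 * n := by
    rw [← Module.End.finrank_ker_pow_eq_sum, hN, LinearMap.ker_zero, finrank_top, hdim]
  obtain ⟨l, hsorted, hpos, hsum, hcount⟩ :=
    List.exists_pairwise_ge_countP_eq_of_antitone N hd_antitone hd_zero
  refine ⟨l, hsorted, ?_, hpos, fun i => ?_⟩
  · have : ∑ i ∈ Finset.range N, d i = 2 * l.sum := by
      rw [hsum, Finset.mul_sum]
      exact Finset.sum_congr rfl fun i _ => (Nat.two_mul_div_two_of_even (hd_even i)).symm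
    omega
  · rw [hcount, Module.End.finrank_ker_pow_succ, Nat.add_sub_cancel_left,
      Nat.two_mul_div_two_of_even (hd_even i)]

/-- over an algebraically closed field of characteristic `0`, every
nilpotent endomorphism `T` of a `2n`-dimensional symplectic space that is
self-adjoint for the symplectic form has Jordan blocks occurring in pairs: there is
a partition `n₁ ≥ n₂ ≥ ⋯ ≥ n_t` of `n` such that the Jordan type of `T` is
`(n₁, n₁, n₂, n₂, …, n_t, n_t)` (the number of Jordan blocks of size `≥ i`, i.e.
`dim ker T^i - dim ker T^(i-1)`, equals twice the number of parts `≥ i`). -/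
theorem stmt_19 (k : Type*) [Field k] [IsAlgClosed k] [CharZero k]
    (V : Type*) [AddCommGroup V] [Module k V] [FiniteDimensional k V]
    (n : ℕ) (hdim : Module.finrank k V = 2 * n)
    (ω : LinearMap.BilinForm k V)
    (halt : ∀ x : V, ω x x = 0) (hnd : ω.Nondegenerate)
    (T : V →ₗ[k] V)
    (hsa : ∀ x y : V, ω (T x) y = ω x (T y)) (hnil : IsNilpotent T) :
    ∃ l : List ℕ, l.Pairwise (· ≥ ·) ∧ l.sum = n ∧ (∀ m ∈ l, 1 ≤ m) ∧
      ∀ i : ℕ,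
        Module.finrank k (LinearMap.ker (T ^ (i + 1))) -
            Module.finrank k (LinearMap.ker (T ^ i)) =
          2 * l.countP (fun m => i + 1 ≤ m) :=
  stmt_19_general k V n hdim ω halt hnd T hsa hnil
end
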